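/- Let N be a norm on ℝ², let P : [0, L_n] → ℝ² and Q : [0, M_m] → ℝ² be the unit-speed parametrizations under N of two polygonal curves, and define h(z) := N(P(z₁) − Q(z₂)). Then for every cell border B, the optimum function t ↦ opt_h((0,0), B(t)) is continuous on its domain. -/
import Mathlib


/-- `N : ℝ × ℝ → ℝ` is a norm on `ℝ²`. -/
def IsNorm (N : ℝ × ℝ → ℝ) : Prop :=
  (∀ z : ℝ × ℝ, 0 ≤ N z) ∧
  (∀ z : ℝ × ℝ, N z = 0 ↔ z = 0) ∧
  (∀ (c : ℝ) (z : ℝ × ℝ), N (c • z) = |c| * N z) ∧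
  (∀ z w : ℝ × ℝ, N (z + w) ≤ N z + N w)

/-- `P` is the unit-speed parametrization under the norm `N` of the polygonal curve
with vertices `p 0, …, p n` (consecutive vertices distinct) and arc lengths `L`. -/
def IsUnitSpeedParam (N : ℝ × ℝ → ℝ) (n : ℕ) (p : ℕ → ℝ × ℝ) (L : ℕ → ℝ)
    (P : ℝ → ℝ × ℝ) : Prop :=
  (∀ i : ℕ, 1 ≤ i → i ≤ n → p i ≠ p (i - 1)) ∧
  (∀ i : ℕ, L i = ∑ i' ∈ Finset.Icc 1 i, N (p i' - p (i' - 1))) ∧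
  (∀ i : ℕ, 1 ≤ i → i ≤ n → ∀ s ∈ Set.Icc (L (i - 1)) (L i),
    P s = p (i - 1) + ((s - L (i - 1)) / N (p i - p (i - 1))) • (p i - p (i - 1)))

/-- A cell border of the parameter space of two polygonal curves with arc lengths
`L` (of `n` segments) and `M` (of `m` segments). -/
def IsCellBorder (n m : ℕ) (L M : ℕ → ℝ) (lo hi : ℝ) (B : ℝ → ℝ × ℝ) : Prop :=
  (∃ i j : ℕ, 1 ≤ i ∧ i ≤ n ∧ j ≤ m ∧ lo = L (i - 1) ∧ hi = L i ∧
      ∀ t : ℝ, B t = (t, M j)) ∨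
  (∃ i j : ℕ, i ≤ n ∧ 1 ≤ j ∧ j ≤ m ∧ lo = M (j - 1) ∧ hi = M j ∧
      ∀ t : ℝ, B t = (L i, t))

/-- An `(x,y)`-path: a function `f : [x₁+x₂, y₁+y₂] → ℝ` with `f(x₁+x₂) = x₁`,
`f(y₁+y₂) = y₁` such that both `f` and `s ↦ s − f s` are monotone non-decreasing. -/
def IsPath (x y : ℝ × ℝ) (f : ℝ → ℝ) : Prop :=
  x.1 ≤ y.1 ∧ x.2 ≤ y.2 ∧
  f (x.1 + x.2) = x.1 ∧ f (y.1 + y.2) = y.1 ∧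
  MonotoneOn f (Set.Icc (x.1 + x.2) (y.1 + y.2)) ∧
  MonotoneOn (fun s => s - f s) (Set.Icc (x.1 + x.2) (y.1 + y.2))

/-- The cost of an `(x,y)`-path `f` with respect to `h`. -/
noncomputable def pathCost (h : ℝ × ℝ → ℝ) (x y : ℝ × ℝ) (f : ℝ → ℝ) : ℝ :=
  ∫ s in (x.1 + x.2)..(y.1 + y.2), h (f s, s - f s)

/-- `opt_h(x,y)`: the infimum of the costs of all `(x,y)`-paths. -/
noncomputable def optCost (h : ℝ × ℝ → ℝ) (x y : ℝ × ℝ) : ℝ :=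
  sInf (pathCost h x y '' {f : ℝ → ℝ | IsPath x y f})



open Set

lemma norm_sub_symm (N : ℝ × ℝ → ℝ) (hN : IsNorm N) (a b : ℝ × ℝ) :
    N (a - b) = N (b - a) := by
  have := hN.2.2.1 (-1) (b - a)
  simpa [neg_sub] using this

lemma norm_tri (N : ℝ × ℝ → ℝ) (hN : IsNorm N) (a b c : ℝ × ℝ) :
    N (a - b) ≤ N (a - c) + N (c - b) := by
  have := hN.2.2.2 (a - c) (c - b)
  simpa using this

lemma L_zero (N : ℝ × ℝ → ℝ) (n : ℕ) (p : ℕ → ℝ × ℝ) (L : ℕ → ℝ) (P : ℝ → ℝ × ℝ)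
    (hP : IsUnitSpeedParam N n p L P) : L 0 = 0 := by
  simp [hP.2.1 0]

lemma L_mono (N : ℝ × ℝ → ℝ) (hN : IsNorm N) (n : ℕ) (p : ℕ → ℝ × ℝ) (L : ℕ → ℝ)
    (P : ℝ → ℝ × ℝ) (hP : IsUnitSpeedParam N n p L P) :
    Monotone L := by
  intro i j hij
  rw [hP.2.1 i, hP.2.1 j]
  apply Finset.sum_le_sum_of_subset_of_nonneg
  · exact Finset.Icc_subset_Icc_right hij
  · intro k _ _; exact hN.1 _

lemma L_nonneg (N : ℝ × ℝ → ℝ) (hN : IsNorm N) (n : ℕ) (p : ℕ → ℝ × ℝ) (L : ℕ → ℝ)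
    (P : ℝ → ℝ × ℝ) (hP : IsUnitSpeedParam N n p L P) (i : ℕ) : 0 ≤ L i := by
  have := L_mono N hN n p L P hP (Nat.zero_le i)
  rw [L_zero N n p L P hP] at this; exact this

lemma param_lip_aux (N : ℝ × ℝ → ℝ) (hN : IsNorm N) (n : ℕ) (p : ℕ → ℝ × ℝ)
    (L : ℕ → ℝ) (P : ℝ → ℝ × ℝ) (hP : IsUnitSpeedParam N n p L P) :
    ∀ i : ℕ, i ≤ n → ∀ a b : ℝ, 0 ≤ a → a ≤ b → b ≤ L i → N (P b - P a) ≤ b - a := by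
  intro i
  induction i with
  | zero =>
    intro _ a b ha hab hb
    rw [L_zero N n p L P hP] at hb
    have : a = b := le_antisymm hab (hb.trans ha)
    subst this
    simp [(hN.2.1 0).2 rfl]
  | succ i ih =>
    intro hin a b ha hab hb
    have hin' : i ≤ n := Nat.le_of_succ_le hin
    rcases le_or_gt b (L i) with hbl | hbl
    · exact ih hin' a b ha hab hbl
    -- b ∈ (L i, L (i+1)]
    have hv : p (i + 1) ≠ p i := by
      have := hP.1 (i + 1) (Nat.succ_le_succ (Nat.zero_le i)) hin
      simpa using this
    have hNv : 0 < N (p (i + 1) - p i) := by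
      rcases lt_or_eq_of_le (hN.1 (p (i + 1) - p i)) with h | h
      · exact h
      · exact absurd (sub_eq_zero.mp ((hN.2.1 _).mp h.symm)) hv
    have hseg : ∀ c d : ℝ, L i ≤ c → c ≤ d → d ≤ L (i + 1) → N (P d - P c) ≤ d - c := by
      intro c d hc hcd hd
      have hform := hP.2.2 (i + 1) (Nat.succ_le_succ (Nat.zero_le i)) hin
      simp only [Nat.add_sub_cancel] at hform
      have hPc := hform c ⟨hc, hcd.trans hd⟩
      have hPd := hform d ⟨hc.trans hcd, hd⟩
      rw [hPc, hPd]
      have : (p i + ((d - L i) / N (p (i+1) - p i)) • (p (i+1) - p i)) -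
          (p i + ((c - L i) / N (p (i+1) - p i)) • (p (i+1) - p i)) =
          ((d - c) / N (p (i+1) - p i)) • (p (i+1) - p i) := by
        have : (d - L i) / N (p (i+1) - p i) - (c - L i) / N (p (i+1) - p i) =
            (d - c) / N (p (i+1) - p i) := by ring
        rw [add_sub_add_left_eq_sub, ← sub_smul, this]
      rw [this, hN.2.2.1]
      rw [abs_of_nonneg (div_nonneg (by linarith) hNv.le)]
      rw [div_mul_cancel₀ _ (ne_of_gt hNv)]
    rcases le_or_gt (L i) a with hal | hal
    · exact hseg a b hal hab hb
    · have h1 := ih hin' a (L i) ha hal.le le_rfl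
      have h2 := hseg (L i) b le_rfl hbl.le hb
      calc N (P b - P a) ≤ N (P b - P (L i)) + N (P (L i) - P a) := norm_tri N hN _ _ _
        _ ≤ (b - L i) + (L i - a) := add_le_add h2 h1
        _ = b - a := by ring

lemma param_lip (N : ℝ × ℝ → ℝ) (hN : IsNorm N) (n : ℕ) (p : ℕ → ℝ × ℝ)
    (L : ℕ → ℝ) (P : ℝ → ℝ × ℝ) (hP : IsUnitSpeedParam N n p L P) (a b : ℝ)
    (ha : a ∈ Set.Icc 0 (L n)) (hb : b ∈ Set.Icc 0 (L n)) :
    N (P a - P b) ≤ |a - b| := by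
  rcases le_total a b with hab | hab
  · rw [norm_sub_symm N hN, abs_sub_comm, abs_of_nonneg (by linarith)]
    exact param_lip_aux N hN n p L P hP n le_rfl a b ha.1 hab hb.2
  · rw [abs_of_nonneg (by linarith)]
    exact param_lip_aux N hN n p L P hP n le_rfl b a hb.1 hab ha.2


lemma isPath_iff (y : ℝ × ℝ) (f : ℝ → ℝ) : IsPath (0, 0) y f ↔
    (0 ≤ y.1 ∧ 0 ≤ y.2 ∧ f 0 = 0 ∧ f (y.1 + y.2) = y.1 ∧
     MonotoneOn f (Set.Icc 0 (y.1 + y.2)) ∧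
     MonotoneOn (fun s => s - f s) (Set.Icc 0 (y.1 + y.2))) := by
  simp [IsPath]

lemma pathCost0 (h : ℝ × ℝ → ℝ) (y : ℝ × ℝ) (f : ℝ → ℝ) :
    pathCost h (0, 0) y f = ∫ s in (0:ℝ)..(y.1 + y.2), h (f s, s - f s) := by
  simp [pathCost]

lemma path_mem_box (y : ℝ × ℝ) (f : ℝ → ℝ) (hf : IsPath (0, 0) y f)
    (s : ℝ) (hs : s ∈ Set.Icc 0 (y.1 + y.2)) :
    0 ≤ f s ∧ f s ≤ y.1 ∧ 0 ≤ s - f s ∧ s - f s ≤ y.2 := by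
  rw [isPath_iff] at hf
  obtain ⟨h1, h2, h3, h4, h5, h6⟩ := hf
  have e0 : (0:ℝ) ∈ Set.Icc 0 (y.1 + y.2) := ⟨le_rfl, by linarith⟩
  have e1 : (y.1 + y.2) ∈ Set.Icc 0 (y.1 + y.2) := ⟨by linarith, le_rfl⟩
  have a1 := h5 e0 hs hs.1
  have a2 := h5 hs e1 hs.2
  have a3 := h6 e0 hs hs.1
  have a4 := h6 hs e1 hs.2
  simp only [h3, h4] at a1 a2 a3 a4
  simp only [sub_zero] at a3
  refine ⟨a1, a2, by linarith, by linarith⟩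

lemma path_lipschitz (y : ℝ × ℝ) (f : ℝ → ℝ) (hf : IsPath (0, 0) y f)
    {s s' : ℝ} (hs : s ∈ Set.Icc 0 (y.1 + y.2)) (hs' : s' ∈ Set.Icc 0 (y.1 + y.2))
    (hss' : s ≤ s') : f s ≤ f s' ∧ f s' - f s ≤ s' - s := by
  rw [isPath_iff] at hf
  have a1 := hf.2.2.2.2.1 hs hs' hss'
  have a2 := hf.2.2.2.2.2 hs hs' hss'
  simp only at a2
  exact ⟨a1, by linarith⟩

lemma exists_path (y : ℝ × ℝ) (h1 : 0 ≤ y.1) (h2 : 0 ≤ y.2) :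
    IsPath (0, 0) y (fun s => min s y.1) := by
  rw [isPath_iff]
  refine ⟨h1, h2, by simp [h1], by simp [min_eq_right]; linarith, ?_, ?_⟩
  · intro s _ s' _ hss'
    exact min_le_min hss' le_rfl
  · intro s _ s' _ hss'
    simp only [min_def]
    split_ifs <;> simp <;> linarith

lemma cost_nonneg (h : ℝ × ℝ → ℝ) (hh0 : ∀ z, 0 ≤ h z) (y : ℝ × ℝ) (f : ℝ → ℝ)
    (hf : IsPath (0, 0) y f) : 0 ≤ pathCost h (0, 0) y f := by
  rw [isPath_iff] at hf
  rw [pathCost0]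
  exact intervalIntegral.integral_nonneg (by linarith [hf.1, hf.2.1])
    (fun u _ => hh0 _)

lemma costs_bddBelow (h : ℝ × ℝ → ℝ) (hh0 : ∀ z, 0 ≤ h z) (y : ℝ × ℝ) :
    BddBelow (pathCost h (0, 0) y '' {f : ℝ → ℝ | IsPath (0, 0) y f}) := by
  refine ⟨0, ?_⟩
  rintro c ⟨f, hf, rfl⟩
  exact cost_nonneg h hh0 y f hf

lemma opt_nonneg (h : ℝ × ℝ → ℝ) (hh0 : ∀ z, 0 ≤ h z) (y : ℝ × ℝ)
    (h1 : 0 ≤ y.1) (h2 : 0 ≤ y.2) : 0 ≤ optCost h (0, 0) y :=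
  le_csInf ⟨_, Set.mem_image_of_mem _ (show (fun s => min s y.1) ∈ {f : ℝ → ℝ | IsPath (0,0) y f} from exists_path y h1 h2)⟩
    (by rintro c ⟨f, hf, rfl⟩; exact cost_nonneg h hh0 y f hf)

lemma path_integrable (h : ℝ × ℝ → ℝ) (X Y : ℝ)
    (hlip : ∀ a b c d : ℝ, a ∈ Set.Icc 0 X → b ∈ Set.Icc 0 Y → c ∈ Set.Icc 0 X →
      d ∈ Set.Icc 0 Y → h (a, b) ≤ h (c, d) + |a - c| + |b - d|)
    (y : ℝ × ℝ) (hy1 : y.1 ≤ X) (hy2 : y.2 ≤ Y)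
    (f : ℝ → ℝ) (hf : IsPath (0, 0) y f) (u v : ℝ)
    (hu : 0 ≤ u) (huv : u ≤ v) (hv : v ≤ y.1 + y.2) :
    IntervalIntegrable (fun s => h (f s, s - f s)) MeasureTheory.volume u v := by
  have hy1' : 0 ≤ y.1 := (isPath_iff y f |>.mp hf).1
  have hy2' : 0 ≤ y.2 := (isPath_iff y f |>.mp hf).2.1
  have hsub : Set.Icc u v ⊆ Set.Icc 0 (y.1 + y.2) := Set.Icc_subset_Icc hu hv
  have hbox : ∀ s ∈ Set.Icc u v, f s ∈ Set.Icc 0 X ∧ (s - f s) ∈ Set.Icc 0 Y := by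
    intro s hs
    obtain ⟨b1, b2, b3, b4⟩ := path_mem_box y f hf s (hsub hs)
    exact ⟨⟨b1, b2.trans hy1⟩, ⟨b3, b4.trans hy2⟩⟩
  have hcont : ContinuousOn (fun s => h (f s, s - f s)) (Set.Icc u v) := by
    apply LipschitzOnWith.continuousOn (K := 1)
    rw [lipschitzOnWith_iff_dist_le_mul]
    intro s hs s' hs' 
    rw [Real.dist_eq, Real.dist_eq, NNReal.coe_one, one_mul]
    wlog hss' : s' ≤ s generalizing s s' with HW
    · rw [abs_sub_comm, abs_sub_comm s s']
      exact HW s' hs' s hs (le_of_not_ge hss')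
    obtain ⟨m1, m2⟩ := path_lipschitz y f hf (hsub hs') (hsub hs) hss'
    obtain ⟨c1, c2⟩ := hbox s hs
    obtain ⟨c1', c2'⟩ := hbox s' hs'
    have e1 := hlip (f s) (s - f s) (f s') (s' - f s') c1 c2 c1' c2'
    have e2 := hlip (f s') (s' - f s') (f s) (s - f s) c1' c2' c1 c2
    rw [abs_le]
    constructor
    · have : |f s' - f s| + |s' - f s' - (s - f s)| ≤ |s - s'| := by
        rw [abs_of_nonpos (by linarith), abs_of_nonpos (by linarith),
          abs_of_nonneg (by linarith)]
        linarith
      nlinarith [abs_nonneg (f s' - f s), abs_nonneg (s' - f s' - (s - f s))]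
    · have : |f s - f s'| + |s - f s - (s' - f s')| ≤ |s - s'| := by
        rw [abs_of_nonneg (by linarith), abs_of_nonneg (by linarith),
          abs_of_nonneg (by linarith)]
        linarith
      nlinarith [abs_nonneg (f s - f s'), abs_nonneg (s - f s - (s' - f s'))]
  exact hcont.intervalIntegrable_of_Icc huv


lemma opt_lipschitz (h : ℝ × ℝ → ℝ) (X Y C : ℝ)
    (hh0 : ∀ z, 0 ≤ h z)
    (hlip : ∀ a b c d : ℝ, a ∈ Set.Icc 0 X → b ∈ Set.Icc 0 Y → c ∈ Set.Icc 0 X →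
      d ∈ Set.Icc 0 Y → h (a, b) ≤ h (c, d) + |a - c| + |b - d|)
    (hC : ∀ a b : ℝ, a ∈ Set.Icc 0 X → b ∈ Set.Icc 0 Y → h (a, b) ≤ C)
    (a b a' b' : ℝ) (ha : 0 ≤ a) (hb : 0 ≤ b) (haa : a ≤ a') (hbb : b ≤ b')
    (ha' : a' ≤ X) (hb' : b' ≤ Y) :
    |optCost h (0, 0) (a', b') - optCost h (0, 0) (a, b)| ≤
      (C + 2 * (X + Y)) * ((a' - a) + (b' - b)) := by
  have hX : 0 ≤ X := le_trans (le_trans ha haa) ha'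
  have hY : 0 ≤ Y := le_trans (le_trans hb hbb) hb'
  have hC0 : 0 ≤ C := le_trans (hh0 (0, 0)) (hC 0 0 ⟨le_rfl, hX⟩ ⟨le_rfl, hY⟩)
  have hD : 0 ≤ (a' - a) + (b' - b) := by linarith
  have ha0' : 0 ≤ a' := le_trans ha haa
  have hb0' : 0 ≤ b' := le_trans hb hbb
  have hS : 0 ≤ a + b := by linarith
  have hSS : a + b ≤ a' + b' := by linarith
  have hne : (pathCost h (0,0) (a,b) '' {f : ℝ → ℝ | IsPath (0,0) (a,b) f}).Nonempty :=
    ⟨_, Set.mem_image_of_mem _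
      (show (fun s => min s (a,b).1) ∈ {f : ℝ → ℝ | IsPath (0,0) (a,b) f} from
        exists_path (a,b) ha hb)⟩
  have hne' : (pathCost h (0,0) (a',b') '' {f : ℝ → ℝ | IsPath (0,0) (a',b') f}).Nonempty :=
    ⟨_, Set.mem_image_of_mem _
      (show (fun s => min s (a',b').1) ∈ {f : ℝ → ℝ | IsPath (0,0) (a',b') f} from
        exists_path (a',b') ha0' hb0')⟩
  -- Direction 1: opt(a',b') ≤ opt(a,b) + C * Δ  (extend any path)
  have d1 : optCost h (0,0) (a',b') ≤ optCost h (0,0) (a,b) + C * ((a' - a) + (b' - b)) := by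
    have key : ∀ f : ℝ → ℝ, IsPath (0,0) (a,b) f →
        optCost h (0,0) (a',b') ≤ pathCost h (0,0) (a,b) f + C * ((a' - a) + (b' - b)) := by
      intro f hf
      obtain ⟨p1, p2, p3, p4, p5, p6⟩ := (isPath_iff (a,b) f).mp hf
      simp only at p1 p2 p3 p4 p5 p6
      set g : ℝ → ℝ := fun s => max (f (min s (a + b))) (min (s - b) a') with hgdef
      have hg : IsPath (0,0) (a',b') g := by
        rw [isPath_iff]
        simp only
        refine ⟨ha0', hb0', ?_, ?_, ?_, ?_⟩
        · show max (f (min 0 (a + b))) (min (0 - b) a') = 0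
          rw [min_eq_left hS, p3]
          exact max_eq_left (le_trans (min_le_left _ _) (by linarith))
        · show max (f (min (a' + b') (a + b))) (min (a' + b' - b) a') = a'
          rw [min_eq_right hSS, p4, min_eq_right (by linarith)]
          exact max_eq_right haa
        · intro s hs s' hs' hss'
          have m1 : min s (a + b) ∈ Set.Icc 0 (a + b) := ⟨le_min hs.1 hS, min_le_right _ _⟩
          have m2 : min s' (a + b) ∈ Set.Icc 0 (a + b) := ⟨le_min hs'.1 hS, min_le_right _ _⟩
          exact max_le_max (p5 m1 m2 (min_le_min hss' le_rfl)) (min_le_min (by linarith) le_rfl)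
        · intro s hs s' hs' hss'
          simp only
          have m1 : min s (a + b) ∈ Set.Icc 0 (a + b) := ⟨le_min hs.1 hS, min_le_right _ _⟩
          have m2 : min s' (a + b) ∈ Set.Icc 0 (a + b) := ⟨le_min hs'.1 hS, min_le_right _ _⟩
          have hmm : min s (a + b) ≤ min s' (a + b) := min_le_min hss' le_rfl
          have e1 := p6 m1 m2 hmm
          simp only at e1
          have e2 : min s' (a + b) - min s (a + b) ≤ s' - s := by
            simp only [min_def]; split_ifs <;> linarith
          have e3 : min (s' - b) a' ≤ min (s - b) a' + (s' - s) := by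
            simp only [min_def]; split_ifs <;> linarith
          have e4 : max (f (min s' (a+b))) (min (s' - b) a') ≤
              max (f (min s (a+b))) (min (s - b) a') + (s' - s) := by
            apply max_le
            · have := le_max_left (f (min s (a+b))) (min (s - b) a'); linarith
            · have := le_max_right (f (min s (a+b))) (min (s - b) a'); linarith
          show s - max (f (min s (a+b))) (min (s - b) a') ≤
              s' - max (f (min s' (a+b))) (min (s' - b) a')
          linarith
      have hint1 : IntervalIntegrable (fun s => h (g s, s - g s)) MeasureTheory.volume 0 (a+b) :=
        path_integrable h X Y hlip (a',b') ha' hb' g hg 0 (a+b) le_rfl hS (by simp; linarith)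
      have hint2 : IntervalIntegrable (fun s => h (g s, s - g s)) MeasureTheory.volume (a+b) (a'+b') :=
        path_integrable h X Y hlip (a',b') ha' hb' g hg (a+b) (a'+b') hS hSS (by simp)
      have hsplit : pathCost h (0,0) (a',b') g =
          (∫ s in (0:ℝ)..(a+b), h (g s, s - g s)) + ∫ s in (a+b)..(a'+b'), h (g s, s - g s) := by
        rw [pathCost0]
        simp only
        exact (intervalIntegral.integral_add_adjacent_intervals hint1 hint2).symm
      have heq : (∫ s in (0:ℝ)..(a+b), h (g s, s - g s)) =
          ∫ s in (0:ℝ)..(a+b), h (f s, s - f s) := by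
        apply intervalIntegral.integral_congr
        intro s hs
        rw [Set.uIcc_of_le hS] at hs
        have hb2 := path_mem_box (a,b) f hf s (by simpa using hs)
        simp only at hb2
        have hgs : g s = f s := by
          rw [hgdef]
          simp only
          rw [min_eq_left hs.2]
          exact max_eq_left (le_trans (min_le_left _ _) (by linarith [hb2.2.2.2]))
        simp [hgs]
      have htail : (∫ s in (a+b)..(a'+b'), h (g s, s - g s)) ≤ C * ((a' - a) + (b' - b)) := by
        have hpt : ∀ s ∈ Set.Icc (a+b) (a'+b'), h (g s, s - g s) ≤ C := by
          intro s hs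
          have hbg := path_mem_box (a',b') g hg s (by constructor <;> [linarith [hs.1]; simpa using hs.2])
          simp only at hbg
          exact hC _ _ ⟨hbg.1, hbg.2.1.trans ha'⟩ ⟨hbg.2.2.1, hbg.2.2.2.trans hb'⟩
        calc (∫ s in (a+b)..(a'+b'), h (g s, s - g s)) ≤ ∫ _ in (a+b)..(a'+b'), C :=
              intervalIntegral.integral_mono_on hSS hint2 intervalIntegrable_const hpt
          _ = C * ((a' - a) + (b' - b)) := by
              rw [intervalIntegral.integral_const, smul_eq_mul]; ring
      have hgle : pathCost h (0,0) (a',b') g ≤ pathCost h (0,0) (a,b) f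
          + C * ((a' - a) + (b' - b)) := by
        rw [hsplit, heq, pathCost0 h (a,b) f]
        simp only
        linarith
      have := csInf_le (costs_bddBelow h hh0 (a',b'))
        (Set.mem_image_of_mem _ (show g ∈ {f : ℝ → ℝ | IsPath (0,0) (a',b') f} from hg))
      rw [optCost]
      linarith
    have step : optCost h (0,0) (a',b') - C * ((a' - a) + (b' - b)) ≤ optCost h (0,0) (a,b) := by
      refine le_csInf hne ?_
      rintro c ⟨f, hf, rfl⟩
      linarith [key f hf]
    linarith
  -- Direction 2: opt(a,b) ≤ opt(a',b') + 2(X+Y) * Δ  (clamp any path)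
  have d2 : optCost h (0,0) (a,b) ≤ optCost h (0,0) (a',b')
      + (2 * (X + Y)) * ((a' - a) + (b' - b)) := by
    have key : ∀ f : ℝ → ℝ, IsPath (0,0) (a',b') f →
        optCost h (0,0) (a,b) ≤ pathCost h (0,0) (a',b') f
          + (2 * (X + Y)) * ((a' - a) + (b' - b)) := by
      intro f hf
      obtain ⟨p1, p2, p3, p4, p5, p6⟩ := (isPath_iff (a',b') f).mp hf
      simp only at p1 p2 p3 p4 p5 p6
      set g : ℝ → ℝ := fun s => max (min (f s) a) (s - b) with hgdef
      have hsub : Set.Icc (0:ℝ) (a+b) ⊆ Set.Icc 0 (a'+b') := Set.Icc_subset_Icc le_rfl hSS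
      have hg : IsPath (0,0) (a,b) g := by
        rw [isPath_iff]
        simp only
        refine ⟨ha, hb, ?_, ?_, ?_, ?_⟩
        · show max (min (f 0) a) (0 - b) = 0
          rw [p3, min_eq_left ha]
          exact max_eq_left (by linarith)
        · show max (min (f (a + b)) a) (a + b - b) = a
          have : a + b - b = a := by ring
          rw [this]
          exact max_eq_right (min_le_right _ _)
        · intro s hs s' hs' hss'
          exact max_le_max (min_le_min (p5 (hsub hs) (hsub hs') hss') le_rfl) (by linarith)
        · intro s hs s' hs' hss'
          simp only
          have e1 := p6 (hsub hs) (hsub hs') hss'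
          simp only at e1
          have e0 := p5 (hsub hs) (hsub hs') hss'
          have e3 : min (f s') a ≤ min (f s) a + (s' - s) := by
            simp only [min_def]; split_ifs <;> linarith
          have e4 : max (min (f s') a) (s' - b) ≤ max (min (f s) a) (s - b) + (s' - s) := by
            apply max_le
            · have := le_max_left (min (f s) a) (s - b); linarith
            · have := le_max_right (min (f s) a) (s - b); linarith
          show s - max (min (f s) a) (s - b) ≤ s' - max (min (f s') a) (s' - b)
          linarith
      have hintf' : IntervalIntegrable (fun s => h (f s, s - f s)) MeasureTheory.volume 0 (a+b) :=
        path_integrable h X Y hlip (a',b') ha' hb' f hf 0 (a+b) le_rfl hS (by simp; linarith)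
      have hintf2 : IntervalIntegrable (fun s => h (f s, s - f s)) MeasureTheory.volume (a+b) (a'+b') :=
        path_integrable h X Y hlip (a',b') ha' hb' f hf (a+b) (a'+b') hS hSS (by simp)
      have hintg : IntervalIntegrable (fun s => h (g s, s - g s)) MeasureTheory.volume 0 (a+b) :=
        path_integrable h X Y hlip (a,b) (le_trans haa ha') (le_trans hbb hb') g hg 0 (a+b)
          le_rfl hS (by simp)
      have hpt : ∀ s ∈ Set.Icc (0:ℝ) (a+b),
          h (g s, s - g s) ≤ h (f s, s - f s) + 2 * ((a' - a) + (b' - b)) := by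
        intro s hs
        have hbf := path_mem_box (a',b') f hf s (hsub hs)
        simp only at hbf
        have hbg := path_mem_box (a,b) g hg s hs
        simp only at hbg
        have habs : |g s - f s| ≤ (a' - a) + (b' - b) := by
          rw [hgdef]
          simp only
          rw [abs_le]
          constructor <;>
            (simp only [max_def, min_def]; split_ifs <;>
              linarith [hs.2, hbf.1, hbf.2.1, hbf.2.2.1, hbf.2.2.2])
        have habs2 : |s - g s - (s - f s)| ≤ (a' - a) + (b' - b) := by
          rw [show s - g s - (s - f s) = -(g s - f s) by ring, abs_neg]
          exact habs
        have hlipgf := hlip (g s) (s - g s) (f s) (s - f s)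
          ⟨hbg.1, hbg.2.1.trans (le_trans haa ha')⟩
          ⟨hbg.2.2.1, hbg.2.2.2.trans (le_trans hbb hb')⟩
          ⟨hbf.1, hbf.2.1.trans ha'⟩ ⟨hbf.2.2.1, hbf.2.2.2.trans hb'⟩
        have u1 := abs_le.mp habs
        have u2 := abs_le.mp habs2
        have v1 : |g s - f s| ≤ (a' - a) + (b' - b) := habs
        linarith [hlipgf, u1.2, u2.2, habs, habs2,
          abs_le.mp habs |>.1, abs_le.mp habs2 |>.1,
          le_abs_self (g s - f s), le_abs_self (s - g s - (s - f s))]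
      have hcost : pathCost h (0,0) (a,b) g ≤ pathCost h (0,0) (a',b') f
          + (2 * (X + Y)) * ((a' - a) + (b' - b)) := by
        rw [pathCost0, pathCost0]
        simp only
        have c1 : (∫ s in (0:ℝ)..(a+b), h (g s, s - g s)) ≤
            ∫ s in (0:ℝ)..(a+b), (h (f s, s - f s) + 2 * ((a' - a) + (b' - b))) :=
          intervalIntegral.integral_mono_on hS hintg
            (hintf'.add intervalIntegrable_const) hpt
        have c2 : (∫ s in (0:ℝ)..(a+b), (h (f s, s - f s) + 2 * ((a' - a) + (b' - b)))) =
            (∫ s in (0:ℝ)..(a+b), h (f s, s - f s)) + 2 * ((a' - a) + (b' - b)) * (a + b) := by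
          rw [intervalIntegral.integral_add hintf' intervalIntegrable_const,
            intervalIntegral.integral_const, smul_eq_mul]
          ring
        have c3 : (∫ s in (0:ℝ)..(a'+b'), h (f s, s - f s)) =
            (∫ s in (0:ℝ)..(a+b), h (f s, s - f s)) + ∫ s in (a+b)..(a'+b'), h (f s, s - f s) :=
          (intervalIntegral.integral_add_adjacent_intervals hintf' hintf2).symm
        have c4 : 0 ≤ ∫ s in (a+b)..(a'+b'), h (f s, s - f s) :=
          intervalIntegral.integral_nonneg hSS (fun u _ => hh0 _)
        have c5 : 2 * ((a' - a) + (b' - b)) * (a + b) ≤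
            (2 * (X + Y)) * ((a' - a) + (b' - b)) := by
          nlinarith [hD, hS, hX, hY]
        linarith
      have := csInf_le (costs_bddBelow h hh0 (a,b))
        (Set.mem_image_of_mem _ (show g ∈ {f : ℝ → ℝ | IsPath (0,0) (a,b) f} from hg))
      rw [optCost]
      linarith
    have step : optCost h (0,0) (a,b) - (2 * (X + Y)) * ((a' - a) + (b' - b)) ≤
        optCost h (0,0) (a',b') := by
      refine le_csInf hne' ?_
      rintro c ⟨f, hf, rfl⟩
      linarith [key f hf]
    linarith
  have m1 : 0 ≤ C * ((a' - a) + (b' - b)) := mul_nonneg hC0 hD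
  have m2 : 0 ≤ (2 * (X + Y)) * ((a' - a) + (b' - b)) := mul_nonneg (by linarith) hD
  have hexp : (C + 2 * (X + Y)) * ((a' - a) + (b' - b)) =
      C * ((a' - a) + (b' - b)) + (2 * (X + Y)) * ((a' - a) + (b' - b)) := by ring
  rw [abs_le, hexp]
  constructor <;> linarith


/-- For two polygonal curves with unit-speed parametrizations
`P, Q` under a norm `N` and `h(z) = N(P(z₁) − Q(z₂))`, the optimum function
`t ↦ opt_h((0,0), B(t))` of every cell border `B` is continuous on its domain. -/
theorem optimum_function_continuous
    (N : ℝ × ℝ → ℝ) (hN : IsNorm N)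
    (n m : ℕ) (p q : ℕ → ℝ × ℝ) (L M : ℕ → ℝ) (P Q : ℝ → ℝ × ℝ)
    (hP : IsUnitSpeedParam N n p L P) (hQ : IsUnitSpeedParam N m q M Q)
    (h : ℝ × ℝ → ℝ) (hh : ∀ z : ℝ × ℝ, h z = N (P z.1 - Q z.2))
    (lo hi : ℝ) (B : ℝ → ℝ × ℝ) (hB : IsCellBorder n m L M lo hi B) :
    ContinuousOn (fun t => optCost h ((0 : ℝ), (0 : ℝ)) (B t)) (Set.Icc lo hi) := by
  have hh0 : ∀ z, 0 ≤ h z := fun z => by rw [hh]; exact hN.1 _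
  have hLn : ∀ i : ℕ, i ≤ n → L i ≤ L n := fun i hi => L_mono N hN n p L P hP hi
  have hMm : ∀ j : ℕ, j ≤ m → M j ≤ M m := fun j hj => L_mono N hN m q M Q hQ hj
  have hL0 : ∀ i : ℕ, 0 ≤ L i := L_nonneg N hN n p L P hP
  have hM0 : ∀ j : ℕ, 0 ≤ M j := L_nonneg N hN m q M Q hQ
  have hlip : ∀ a b c d : ℝ, a ∈ Set.Icc 0 (L n) → b ∈ Set.Icc 0 (M m) →
      c ∈ Set.Icc 0 (L n) → d ∈ Set.Icc 0 (M m) →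
      h (a, b) ≤ h (c, d) + |a - c| + |b - d| := by
    intro a b c d hA hB' hC' hD
    have e1 : h (a, b) = N (P a - Q b) := hh (a, b)
    have e2 : h (c, d) = N (P c - Q d) := hh (c, d)
    rw [e1, e2]
    have t1 : N (P a - Q b) ≤ N (P a - P c) + N (P c - Q b) := norm_tri N hN _ _ _
    have t2 : N (P c - Q b) ≤ N (P c - Q d) + N (Q d - Q b) := norm_tri N hN _ _ _
    have t3 : N (P a - P c) ≤ |a - c| := param_lip N hN n p L P hP a c hA hC'
    have t4 : N (Q d - Q b) ≤ |d - b| := param_lip N hN m q M Q hQ d b hD hB'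
    rw [abs_sub_comm d b] at t4
    linarith
  set C : ℝ := L n + M m + h (0, 0) with hCdef
  have hCb : ∀ a b : ℝ, a ∈ Set.Icc 0 (L n) → b ∈ Set.Icc 0 (M m) → h (a, b) ≤ C := by
    intro a b hA hB'
    have h0L : (0:ℝ) ∈ Set.Icc 0 (L n) := ⟨le_rfl, hL0 n⟩
    have h0M : (0:ℝ) ∈ Set.Icc 0 (M m) := ⟨le_rfl, hM0 m⟩
    have := hlip a b 0 0 hA hB' h0L h0M
    rw [sub_zero, sub_zero, abs_of_nonneg hA.1, abs_of_nonneg hB'.1] at this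
    have : h (a, b) ≤ h (0, 0) + a + b := this
    have hh00 : h ((0:ℝ), (0:ℝ)) = h (0, 0) := rfl
    rw [hCdef]
    linarith [hA.2, hB'.2]
  set K : ℝ := C + 2 * (L n + M m) with hKdef
  have hK0 : 0 ≤ K := by
    have := hh0 (0, 0)
    rw [hKdef, hCdef]
    linarith [hL0 n, hM0 m]
  rcases hB with ⟨i, j, hi1, hin, hjm, hlo, hhi, hBt⟩ | ⟨i, j, hin, hj1, hjm, hlo, hhi, hBt⟩
  · -- horizontal border: B t = (t, M j)
    apply LipschitzOnWith.continuousOn (K := Real.toNNReal K)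
    rw [lipschitzOnWith_iff_dist_le_mul]
    intro t ht t' ht'
    rw [Real.dist_eq, Real.dist_eq, Real.coe_toNNReal _ hK0]
    have claim : ∀ u u' : ℝ, u ∈ Set.Icc lo hi → u' ∈ Set.Icc lo hi → u ≤ u' →
        |optCost h (0, 0) (B u') - optCost h (0, 0) (B u)| ≤ K * (u' - u) := by
      intro u u' hu hu' huu
      rw [hBt u, hBt u']
      have b1 : 0 ≤ u := le_trans (hlo ▸ hL0 (i - 1)) hu.1
      have b2 : u' ≤ L n := le_trans hu'.2 (hhi ▸ hLn i hin)
      have := opt_lipschitz h (L n) (M m) C hh0 hlip hCb u (M j) u' (M j)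
        b1 (hM0 j) huu le_rfl b2 (hMm j hjm)
      calc |optCost h (0, 0) (u', M j) - optCost h (0, 0) (u, M j)|
          ≤ (C + 2 * (L n + M m)) * ((u' - u) + (M j - M j)) := this
        _ = K * (u' - u) := by rw [hKdef]; ring
    rcases le_total t t' with htt | htt
    · rw [abs_sub_comm, abs_of_nonpos (by linarith : t - t' ≤ 0)]
      have := claim t t' ht ht' htt
      linarith
    · rw [abs_of_nonneg (by linarith : 0 ≤ t - t')]
      have := claim t' t ht' ht htt
      linarith
  · -- vertical border: B t = (L i, t)
    apply LipschitzOnWith.continuousOn (K := Real.toNNReal K)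
    rw [lipschitzOnWith_iff_dist_le_mul]
    intro t ht t' ht'
    rw [Real.dist_eq, Real.dist_eq, Real.coe_toNNReal _ hK0]
    have claim : ∀ u u' : ℝ, u ∈ Set.Icc lo hi → u' ∈ Set.Icc lo hi → u ≤ u' →
        |optCost h (0, 0) (B u') - optCost h (0, 0) (B u)| ≤ K * (u' - u) := by
      intro u u' hu hu' huu
      rw [hBt u, hBt u']
      have b1 : 0 ≤ u := le_trans (hlo ▸ hM0 (j - 1)) hu.1
      have b2 : u' ≤ M m := le_trans hu'.2 (hhi ▸ hMm j hjm)
      have := opt_lipschitz h (L n) (M m) C hh0 hlip hCb (L i) u (L i) u'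
        (hL0 i) b1 le_rfl huu (hLn i hin) b2
      calc |optCost h (0, 0) (L i, u') - optCost h (0, 0) (L i, u)|
          ≤ (C + 2 * (L n + M m)) * ((L i - L i) + (u' - u)) := this
        _ = K * (u' - u) := by rw [hKdef]; ring
    rcases le_total t t' with htt | htt
    · rw [abs_sub_comm, abs_of_nonpos (by linarith : t - t' ≤ 0)]
      have := claim t t' ht ht' htt
      linarith
    · rw [abs_of_nonneg (by linarith : 0 ≤ t - t')]
      have := claim t' t ht' ht htt
      linarith
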